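/- arXiv:2412.13449 — 2 statements merged into one kernel-verified Lean document; each statement's English description precedes it below -/
import Mathlib

section
/- Let f : E → E' be a covering of finite connected Brauer G-sets and e ∈ E. Then the map f_* : Π'_m(E, e) → Π'_m(E', f(e)), [[w]] ↦ [[f(w)]], is a well-defined injective group homomorphism between the reduced fundamental groups. -/
namespace FB

/-- The data of a Brauer `G`-set for `G = ⟨g⟩` infinite cyclic:
a `ℤ`-set `E` (where `act n` is the action of `g^n`), a subset `U`,
an involution `tau` on `U` (encoded as a total map, junk outside `U`),
and a degree function `d`. -/
structure BrauerData where
  E : Type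
  act : ℤ → E → E
  U : Set E
  tau : E → E
  d : E → ℕ

namespace BrauerData

/-- The Nakayama automorphism `σ(e) = g^(d e) · e`. -/
def sigma (B : BrauerData) (e : B.E) : B.E := B.act (B.d e) e

/-- The axioms making the data a Brauer `G`-set. -/
structure IsBrauer (B : BrauerData) : Prop where
  act_zero : ∀ e, B.act 0 e = e
  act_add : ∀ (m n : ℤ) (e : B.E), B.act (m + n) e = B.act m (B.act n e)
  dpos : ∀ e, 0 < B.d e
  d_act : ∀ (n : ℤ) (e : B.E), B.d (B.act n e) = B.d e
  tau_mem : ∀ e ∈ B.U, B.tau e ∈ B.U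
  tau_invol : ∀ e ∈ B.U, B.tau (B.tau e) = e
  sigma_mem : ∀ e, e ∈ B.U ↔ B.sigma e ∈ B.U
  tau_sigma : ∀ e ∈ B.U, B.tau (B.sigma e) = B.sigma (B.tau e)

end BrauerData

/-- The letters of walks: `g`, `g⁻¹`, `τ`. -/
inductive Step : Type
  | g : Step
  | ginv : Step
  | tau : Step
  deriving DecidableEq

namespace BrauerData

/-- Apply one step. -/
def stepFun (B : BrauerData) : Step → B.E → B.E
  | Step.g, e => B.act 1 e
  | Step.ginv, e => B.act (-1) e
  | Step.tau, e => B.tau e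

/-- Terminal of the walk starting at `e` with steps `l` (listed in order of application). -/
def endpt (B : BrauerData) : B.E → List Step → B.E
  | e, [] => e
  | e, s :: l => B.endpt (B.stepFun s e) l

/-- The condition for a list of steps from `e` to be a walk:
both endpoints of a `τ`-step must lie in `U`. -/
def IsValid (B : BrauerData) : B.E → List Step → Prop
  | _, [] => True
  | e, s :: l => (s = Step.tau → e ∈ B.U ∧ B.tau e ∈ B.U) ∧ B.IsValid (B.stepFun s e) l

/-- A Brauer `G`-set is connected if any two half-edges are joined by a walk. -/
def Connected (B : BrauerData) : Prop :=
  ∀ x y : B.E, ∃ l : List Step, B.IsValid x l ∧ B.endpt x l = y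

/-- A closed walk at `e`. -/
def Closed (B : BrauerData) (e : B.E) (l : List Step) : Prop :=
  B.IsValid e l ∧ B.endpt e l = e

theorem endpt_append (B : BrauerData) (e : B.E) (l₁ l₂ : List Step) :
    B.endpt e (l₁ ++ l₂) = B.endpt (B.endpt e l₁) l₂ := by
  induction l₁ generalizing e with
  | nil => rfl
  | cons s l ih => simpa [endpt] using ih (B.stepFun s e)

theorem isValid_append (B : BrauerData) (e : B.E) (l₁ l₂ : List Step) :
    B.IsValid e (l₁ ++ l₂) ↔ B.IsValid e l₁ ∧ B.IsValid (B.endpt e l₁) l₂ := by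
  induction l₁ generalizing e with
  | nil => simp [IsValid, endpt]
  | cons s l ih =>
    simp only [List.cons_append, IsValid, endpt, List.append_eq, ih]
    tauto

end BrauerData

/-- The walk `g^n` (as a list of steps). -/
def gSteps (n : ℤ) : List Step :=
  if 0 ≤ n then List.replicate n.toNat Step.g else List.replicate (-n).toNat Step.ginv

/-- The homotopy relation `≈` on walks of a Brauer `G`-set, relative to a common
source `e`.  It is the equivalence relation generated by (mh1), (mh2), (mh3). -/
inductive Htp (B : BrauerData) : B.E → List Step → List Step → Prop
  | refl (e : B.E) (l : List Step) (h : B.IsValid e l) : Htp B e l l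
  | symm {e : B.E} {l₁ l₂ : List Step} : Htp B e l₁ l₂ → Htp B e l₂ l₁
  | trans {e : B.E} {l₁ l₂ l₃ : List Step} :
      Htp B e l₁ l₂ → Htp B e l₂ l₃ → Htp B e l₁ l₃
  | gginv (e : B.E) : Htp B e [Step.g, Step.ginv] []
  | ginvg (e : B.E) : Htp B e [Step.ginv, Step.g] []
  | tautau (e : B.E) (h : e ∈ B.U) : Htp B e [Step.tau, Step.tau] []
  | square (e : B.E) (h : e ∈ B.U) :
      Htp B e (List.replicate (B.d e) Step.g ++ [Step.tau])
              (Step.tau :: List.replicate (B.d (B.tau e)) Step.g)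
  | post {e : B.E} {l₁ l₂ : List Step} (u : List Step) (h : Htp B e l₁ l₂)
      (hu : B.IsValid (B.endpt e l₁) u) : Htp B e (l₁ ++ u) (l₂ ++ u)
  | pre {l₁ l₂ : List Step} (e : B.E) (v : List Step) (hv : B.IsValid e v)
      (h : Htp B (B.endpt e v) l₁ l₂) : Htp B e (v ++ l₁) (v ++ l₂)

/-- Morphisms of Brauer `G`-sets. -/
def IsMorphism (B B' : BrauerData) (f : B.E → B'.E) : Prop :=
  (∀ (n : ℤ) (e : B.E), f (B.act n e) = B'.act n (f e)) ∧
  (∀ e ∈ B.U, f e ∈ B'.U) ∧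
  (∀ e ∈ B.U, f (B.tau e) = B'.tau (f e)) ∧
  (∀ e, B'.d (f e) = B.d e)

/-- Coverings of Brauer `G`-sets. -/
def IsCovering (B B' : BrauerData) (f : B.E → B'.E) : Prop :=
  (∀ (n : ℤ) (e : B.E), f (B.act n e) = B'.act n (f e)) ∧
  (∀ e, e ∈ B.U ↔ f e ∈ B'.U) ∧
  (∀ e ∈ B.U, f (B.tau e) = B'.tau (f e)) ∧
  (∀ e, B'.d (f e) = B.d e)

/-- Isomorphisms of Brauer `G`-sets: invertible morphisms whose inverse is a morphism. -/
def IsIsoBrauer (B B' : BrauerData) : Prop :=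
  ∃ (f : B.E → B'.E) (h : B'.E → B.E), IsMorphism B B' f ∧ IsMorphism B' B h ∧
    (∀ x, h (f x) = x) ∧ (∀ y, f (h y) = y)

/-- Closed walks at a basepoint. -/
def ClosedWalk (B : BrauerData) (e : B.E) : Type := {l : List Step // B.Closed e l}

/-- Composition (concatenation) of closed walks. -/
def ClosedWalk.comp {B : BrauerData} {e : B.E} (w v : ClosedWalk B e) :
    ClosedWalk B e :=
  ⟨w.1 ++ v.1, by
    obtain ⟨hw1, hw2⟩ := w.2
    obtain ⟨hv1, hv2⟩ := v.2
    refine ⟨?_, ?_⟩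
    · rw [B.isValid_append]
      exact ⟨hw1, by rw [hw2]; exact hv1⟩
    · rw [B.endpt_append, hw2, hv2]⟩

/-- The fundamental group `Π_m(E, e)` of a Brauer `G`-set: homotopy classes of
closed walks at `e` (as a set; the group structure is given by `ClosedWalk.comp`). -/
def Pi1 (B : BrauerData) (e : B.E) : Type :=
  Quot (fun w v : ClosedWalk B e => Htp B e w.1 v.1)

/-- Walks from `x` to `y`. -/
def Walks (B : BrauerData) (x y : B.E) : Type :=
  {l : List Step // B.IsValid x l ∧ B.endpt x l = y}

/-- Composition (concatenation) of walks. -/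
def Walks.comp {B : BrauerData} {x y z : B.E} (u : Walks B x y) (v : Walks B y z) :
    Walks B x z :=
  ⟨u.1 ++ v.1, by
    obtain ⟨hu1, hu2⟩ := u.2
    obtain ⟨hv1, hv2⟩ := v.2
    refine ⟨?_, ?_⟩
    · rw [B.isValid_append]
      exact ⟨hu1, by rw [hu2]; exact hv1⟩
    · rw [B.endpt_append, hu2, hv2]⟩

/-- Hom-sets of the fundamental groupoid `Π_m(E, A)`: homotopy classes of walks
from `x` to `y`. -/
def WalkCls (B : BrauerData) (x y : B.E) : Type :=
  Quot (fun u v : Walks B x y => Htp B x u.1 v.1)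

/-- Composition in the fundamental groupoid. -/
def WalkCls.comp {B : BrauerData} {x y z : B.E} :
    WalkCls B x y → WalkCls B y z → WalkCls B x z := by
  refine Quot.lift (fun u => Quot.lift
      (fun v : Walks B y z => Quot.mk _ (u.comp v)) ?_) ?_
  · intro v₁ v₂ hv
    apply Quot.sound
    show Htp B x (u.1 ++ v₁.1) (u.1 ++ v₂.1)
    refine Htp.pre x u.1 u.2.1 ?_
    rw [u.2.2]
    exact hv
  · intro u₁ u₂ hu
    funext v
    induction v using Quot.ind with
    | _ v =>
      show Quot.mk _ (u₁.comp v) = Quot.mk _ (u₂.comp v)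
      apply Quot.sound
      show Htp B x (u₁.1 ++ v.1) (u₂.1 ++ v.1)
      refine Htp.post v.1 hu ?_
      rw [u₁.2.2]
      exact v.2.1

/-- `r` is the order of the Nakayama automorphism. -/
def IsOrderOf (B : BrauerData) (r : ℕ) : Prop :=
  0 < r ∧ (∀ x, B.sigma^[r] x = x) ∧
    ∀ j : ℕ, 0 < j → (∀ x, B.sigma^[j] x = x) → r ≤ j

/-- The reduced homotopy relation `≈'` (relative to the order `r` of the Nakayama
automorphism): `w ≈' v` iff `w ≈ (t w | g^(k·r·d(t w)) | t v) v` for some `k : ℤ`. -/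
def RedHtp (B : BrauerData) (r : ℕ) (e : B.E) (l₁ l₂ : List Step) : Prop :=
  ∃ k : ℤ, Htp B e l₁ (l₂ ++ gSteps (k * (r : ℤ) * (B.d (B.endpt e l₁) : ℤ)))

/-- One step of the `⟨σ⟩`-orbit relation. -/
def sigmaRel (B : BrauerData) (x y : B.E) : Prop := B.sigma x = y

/-- One step of the `G`-orbit (vertex) relation. -/
def vertexRel (B : BrauerData) (x y : B.E) : Prop := B.act 1 x = y

/-- Vertices of a Brauer `G`-set: the `G`-orbits. -/
def VertexQuot (B : BrauerData) : Type := Quot (vertexRel B)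

/-- Edges of a Brauer `G`-set: pairs `{e, τ e}` with `e ∈ U`, `τ e ≠ e`. -/
def EdgeQuot (B : BrauerData) : Type :=
  Quot (fun a b : {e : B.E // e ∈ B.U ∧ B.tau e ≠ e} => B.tau a.1 = b.1)

/-- Every vertex is finite and has integral f-degree. -/
def IntegralFDegree (B : BrauerData) : Prop :=
  ∀ e : B.E, ∃ m : ℕ, 0 < m ∧ B.act m e = e ∧
    (∀ j : ℕ, 0 < j → B.act j e = e → m ≤ j) ∧ m ∣ B.d e

/-- The group `⟨σ⟩` is admissible: no `⟨σ⟩`-orbit contains both half-edges of an edge. -/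
def SigmaAdmissible (B : BrauerData) : Prop :=
  ∀ e : B.E, ¬ Relation.EqvGen (sigmaRel B) e (B.tau e)

/-- The quotient `E/⟨σ⟩` of an `f_ms`-BG by the group generated by its
Nakayama automorphism. -/
def sigmaQuot (B : BrauerData) (hB : B.IsBrauer) (hU : B.U = Set.univ) : BrauerData where
  E := Quot (sigmaRel B)
  act := fun n => Quot.lift (fun x => Quot.mk (sigmaRel B) (B.act n x))
    (fun x y hxy => by
      apply Quot.sound
      unfold sigmaRel at *
      subst hxy
      show B.sigma (B.act n x) = B.act n (B.sigma x)
      unfold BrauerData.sigma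
      rw [hB.d_act, ← hB.act_add, ← hB.act_add, add_comm])
  U := Quot.mk (sigmaRel B) '' B.U
  tau := Quot.lift (fun x => Quot.mk (sigmaRel B) (B.tau x))
    (fun x y hxy => by
      apply Quot.sound
      unfold sigmaRel at *
      subst hxy
      show B.sigma (B.tau x) = B.tau (B.sigma x)
      exact (hB.tau_sigma x (by rw [hU]; trivial)).symm)
  d := Quot.lift B.d
    (fun x y hxy => by
      unfold sigmaRel at hxy
      subst hxy
      show B.d x = B.d (B.sigma x)
      unfold BrauerData.sigma
      rw [hB.d_act])

open Classical in
/-- The quotient `E/Π` of a Brauer `G`-set by a group `Π` of automorphisms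
(given by a group `Γ` acting by automorphisms via `ρ`). -/
noncomputable def quotData (B : BrauerData) (Γ : Type) [Group Γ]
    (ρ : Γ →* Equiv.Perm B.E) (hρ : ∀ γ : Γ, IsMorphism B B (ρ γ)) : BrauerData where
  E := Quot (fun x y : B.E => ∃ γ : Γ, ρ γ x = y)
  act := fun n => Quot.lift (fun x => Quot.mk _ (B.act n x))
    (fun x y hxy => by
      obtain ⟨γ, hγ⟩ := hxy
      exact Quot.sound ⟨γ, by rw [(hρ γ).1 n x, hγ]⟩)
  U := Quot.mk _ '' B.U
  tau := Quot.lift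
    (fun x => if x ∈ B.U then Quot.mk _ (B.tau x) else Quot.mk _ x)
    (fun x y hxy => by
      obtain ⟨γ, hγ⟩ := hxy
      try dsimp only
      by_cases hx : x ∈ B.U
      · have hy : y ∈ B.U := hγ ▸ (hρ γ).2.1 x hx
        rw [if_pos hx, if_pos hy]
        exact Quot.sound ⟨γ, by rw [(hρ γ).2.2.1 x hx, hγ]⟩
      · have hy : y ∉ B.U := by
          intro hy
          apply hx
          have h1 : ρ γ⁻¹ y ∈ B.U := (hρ γ⁻¹).2.1 y hy
          have h2 : ρ γ⁻¹ y = x := by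
            rw [← hγ, ← Equiv.Perm.mul_apply, ← map_mul, inv_mul_cancel, map_one,
              Equiv.Perm.one_apply]
          rwa [h2] at h1
        rw [if_neg hx, if_neg hy]
        exact Quot.sound ⟨γ, hγ⟩)
  d := Quot.lift B.d
    (fun x y hxy => by
      obtain ⟨γ, hγ⟩ := hxy
      rw [← hγ, (hρ γ).2.2.2 x])

open Classical in
/-- The double cover `Ê` of a Brauer `G`-set: two copies of `E`, with the
involution exchanging the copies at the fixed points of `τ`. -/
noncomputable def hatData (B : BrauerData) : BrauerData where
  E := B.E × Bool
  act := fun n p => (B.act n p.1, p.2)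
  U := {p | p.1 ∈ B.U}
  tau := fun p => if B.tau p.1 = p.1 then (p.1, !p.2) else (B.tau p.1, p.2)
  d := fun p => B.d p.1

section Restrict

variable (B : BrauerData) (hB : B.IsBrauer) (C : Set B.E)
  (hC : ∀ e : B.E, e ∈ C ↔ B.act (B.d e) e ∈ C)

open Classical in
/-- The first-return map forwards, on `E ∖ C`. -/
noncomputable def restrictFwd (x : {x : B.E // x ∉ C}) : {x : B.E // x ∉ C} :=
  have hex : ∃ N : ℕ, 0 < N ∧ B.act N x.1 ∉ C :=
    ⟨B.d x.1, hB.dpos x.1, fun hc => x.2 ((hC x.1).mpr hc)⟩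
  ⟨B.act (Nat.find hex) x.1, (Nat.find_spec hex).2⟩

open Classical in
/-- The first-return map backwards, on `E ∖ C`. -/
noncomputable def restrictBwd (x : {x : B.E // x ∉ C}) : {x : B.E // x ∉ C} :=
  have hex : ∃ N : ℕ, 0 < N ∧ B.act (-(N : ℤ)) x.1 ∉ C := by
    refine ⟨B.d x.1, hB.dpos x.1, fun hc => x.2 ?_⟩
    have h1 : B.act (B.d (B.act (-(B.d x.1 : ℤ)) x.1)) (B.act (-(B.d x.1 : ℤ)) x.1) ∈ C :=
      (hC _).mp hc
    rw [hB.d_act, ← hB.act_add] at h1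
    simpa [hB.act_zero] using h1
  ⟨B.act (-(Nat.find hex : ℤ)) x.1, (Nat.find_spec hex).2⟩

open Classical in
/-- The Brauer `G`-set structure on `E' = E ∖ C` (for `C ⊆ E ∖ U` stable under `σ`):
`g` acts by the first-return map, and the degree is corrected by the number of
deleted points passed. -/
noncomputable def restrictData (hCU : ∀ e ∈ C, e ∉ B.U) : BrauerData where
  E := {x : B.E // x ∉ C}
  act := fun n x =>
    if 0 ≤ n then (restrictFwd B hB C hC)^[n.toNat] x
    else (restrictBwd B hB C hC)^[(-n).toNat] x
  U := {x | x.1 ∈ B.U}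
  tau := fun x =>
    if h : x.1 ∈ B.U then ⟨B.tau x.1, fun hc => hCU _ hc (hB.tau_mem _ h)⟩ else x
  d := fun x => B.d x.1 - ((Finset.Ico 1 (B.d x.1)).filter fun i => B.act i x.1 ∈ C).card

end Restrict

section Lines

/-- The data of a doubly infinite walk. -/
structure Line (B : BrauerData) where
  pt : ℤ → B.E
  st : ℤ → Step

/-- The line condition: `pt i = (st i) (pt (i-1))`, and both endpoints of a
`τ`-step lie in `U`. -/
def Line.IsLine {B : BrauerData} (l : Line B) : Prop :=
  ∀ i : ℤ, (l.st i = Step.tau → l.pt (i - 1) ∈ B.U ∧ l.pt i ∈ B.U) ∧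
    l.pt i = B.stepFun (l.st i) (l.pt (i - 1))

/-- The `n`-th translate of a line. -/
def Line.translate {B : BrauerData} (l : Line B) (n : ℤ) : Line B :=
  ⟨fun i => l.pt (i + n), fun i => l.st (i + n)⟩

/-- The inverse of a step. -/
def Step.inv : Step → Step
  | Step.g => Step.ginv
  | Step.ginv => Step.g
  | Step.tau => Step.tau

/-- The inverse of a line. -/
def Line.inv {B : BrauerData} (l : Line B) : Line B :=
  ⟨fun i => l.pt (-i), fun i => (l.st (1 - i)).inv⟩

/-- A band: a periodic line of the alternating form
`⋯ τ g^{k_i} τ g^{-l_i} τ g^{k_{i+1}} ⋯` with `0 < k_i < d(e_i)`, `0 < l_i < d(h_i)`. -/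
def Line.IsBand {B : BrauerData} (l : Line B) : Prop :=
  l.IsLine ∧
  (∃ n : ℤ, 0 < n ∧ l.translate n = l) ∧
  (∃ i : ℤ, l.st i = Step.tau) ∧
  (∀ i : ℤ, l.st i = Step.tau → l.st (i + 1) ≠ Step.tau) ∧
  (∀ i : ℤ, l.st i = Step.g → l.st (i + 1) = Step.g ∨ l.st (i + 1) = Step.tau) ∧
  (∀ i : ℤ, l.st i = Step.ginv → l.st (i + 1) = Step.ginv ∨ l.st (i + 1) = Step.tau) ∧
  (∀ i : ℤ, l.st i = Step.g → l.st (i + 1) = Step.tau → l.st (i + 2) = Step.ginv) ∧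
  (∀ i : ℤ, l.st i = Step.ginv → l.st (i + 1) = Step.tau → l.st (i + 2) = Step.g) ∧
  (∀ (i : ℤ) (j : ℕ), l.st i = Step.tau → 0 < j →
    (∀ m : ℕ, 0 < m → m ≤ j → l.st (i + m) ≠ Step.tau) → j < B.d (l.pt i))

/-- One step of the equivalence relation on bands: translation or inversion. -/
def BandRel (B : BrauerData) (l₁ l₂ : Line B) : Prop :=
  (∃ n : ℤ, l₂ = l₁.translate n) ∨ l₂ = l₁.inv

/-- The set of equivalence classes of bands. -/
def BandClasses (B : BrauerData) : Type :=
  Quot (fun l₁ l₂ : {l : Line B // l.IsBand} => BandRel B l₁.1 l₂.1)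

end Lines

section Special

/-- Tail of a special walk: blocks `g^i` separated by single `τ`'s, with
`0 < i < d` for the inner blocks and `0 ≤ i < d` for the last block. -/
inductive SpecialTail (B : BrauerData) : B.E → List Step → Prop
  | last (e : B.E) (i : ℕ) (h : i < B.d e) :
      SpecialTail B e (List.replicate i Step.g)
  | cons (e : B.E) (i : ℕ) (h0 : 0 < i) (h : i < B.d e)
      (hU : B.act i e ∈ B.U) (hU' : B.tau (B.act i e) ∈ B.U) {l : List Step}
      (ht : SpecialTail B (B.tau (B.act i e)) l) :
      SpecialTail B e (List.replicate i Step.g ++ Step.tau :: l)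

/-- Special walks: `g^{i_k} τ g^{i_{k-1}} τ ⋯ τ g^{i_1} τ g^{i_0}` with
`0 ≤ i_0 < d(e_0)`, `0 ≤ i_k < d(e_k)` and `0 < i_l < d(e_l)` for `1 ≤ l ≤ k-1`. -/
inductive IsSpecial (B : BrauerData) : B.E → List Step → Prop
  | single (e : B.E) (i : ℕ) (h : i < B.d e) :
      IsSpecial B e (List.replicate i Step.g)
  | multi (e : B.E) (i : ℕ) (h : i < B.d e)
      (hU : B.act i e ∈ B.U) (hU' : B.tau (B.act i e) ∈ B.U) {l : List Step}
      (ht : SpecialTail B (B.tau (B.act i e)) l) :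
      IsSpecial B e (List.replicate i Step.g ++ Step.tau :: l)

end Special

end FB

namespace FB


section Aux

open BrauerData

variable {B : BrauerData}

lemma valid_of_no_tau (B : BrauerData) :
    ∀ (l : List Step) (x : B.E), (∀ s ∈ l, s ≠ Step.tau) → B.IsValid x l := by
  intro l
  induction l with
  | nil => intro x _; trivial
  | cons s l ih =>
    intro x h
    exact ⟨fun hs => absurd hs (h s List.mem_cons_self),
      ih _ fun t ht => h t (List.mem_cons_of_mem _ ht)⟩

lemma valid_replicate_g (B : BrauerData) (n : ℕ) (x : B.E) :
    B.IsValid x (List.replicate n Step.g) :=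
  valid_of_no_tau B _ x (by simp [List.mem_replicate])

lemma valid_replicate_ginv (B : BrauerData) (n : ℕ) (x : B.E) :
    B.IsValid x (List.replicate n Step.ginv) :=
  valid_of_no_tau B _ x (by simp [List.mem_replicate])

lemma valid_gSteps (B : BrauerData) (t : ℤ) (x : B.E) :
    B.IsValid x (gSteps t) := by
  unfold gSteps
  split
  · exact valid_replicate_g B _ x
  · exact valid_replicate_ginv B _ x

lemma endpt_replicate_g (hB : B.IsBrauer) :
    ∀ (n : ℕ) (x : B.E), B.endpt x (List.replicate n Step.g) = B.act n x := by
  intro n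
  induction n with
  | zero => intro x; simp [BrauerData.endpt, hB.act_zero]
  | succ n ih =>
    intro x
    show B.endpt (B.stepFun Step.g x) (List.replicate n Step.g) = _
    rw [ih]
    show B.act n (B.act 1 x) = B.act ((n + 1 : ℕ) : ℤ) x
    rw [← hB.act_add]
    push_cast
    ring_nf

lemma endpt_replicate_ginv (hB : B.IsBrauer) :
    ∀ (n : ℕ) (x : B.E), B.endpt x (List.replicate n Step.ginv) = B.act (-(n : ℤ)) x := by
  intro n
  induction n with
  | zero => intro x; simp [BrauerData.endpt, hB.act_zero]
  | succ n ih =>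
    intro x
    show B.endpt (B.stepFun Step.ginv x) (List.replicate n Step.ginv) = _
    rw [ih]
    show B.act (-(n : ℤ)) (B.act (-1) x) = _
    rw [← hB.act_add]
    push_cast
    ring_nf

lemma endpt_gSteps (hB : B.IsBrauer) (t : ℤ) (x : B.E) :
    B.endpt x (gSteps t) = B.act t x := by
  unfold gSteps
  split
  · rename_i h
    rw [endpt_replicate_g hB, Int.toNat_of_nonneg h]
  · rename_i h
    rw [endpt_replicate_ginv hB, Int.toNat_of_nonneg (by omega), neg_neg]

lemma Htp_endpt (hB : B.IsBrauer) {e : B.E} {l₁ l₂ : List Step}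
    (h : Htp B e l₁ l₂) : B.endpt e l₁ = B.endpt e l₂ := by
  induction h with
  | refl e l h => rfl
  | symm _ ih => exact ih.symm
  | trans _ _ ih1 ih2 => exact ih1.trans ih2
  | gginv e =>
    show B.act (-1) (B.act 1 e) = e
    rw [← hB.act_add]; simpa using hB.act_zero e
  | ginvg e =>
    show B.act 1 (B.act (-1) e) = e
    rw [← hB.act_add]; simpa using hB.act_zero e
  | tautau e h =>
    show B.tau (B.tau e) = e
    exact hB.tau_invol e h
  | square e h =>
    rw [B.endpt_append, endpt_replicate_g hB]
    show B.tau (B.act (B.d e) e) = B.endpt (B.tau e) (List.replicate (B.d (B.tau e)) Step.g)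
    rw [endpt_replicate_g hB]
    exact hB.tau_sigma e h
  | post u _ hu ih => rw [B.endpt_append, B.endpt_append, ih]
  | pre e v hv _ ih => rw [B.endpt_append, B.endpt_append, ih]

lemma Htp_valid (hB : B.IsBrauer) {e : B.E} {l₁ l₂ : List Step}
    (h : Htp B e l₁ l₂) : B.IsValid e l₁ ∧ B.IsValid e l₂ := by
  induction h with
  | refl e l h => exact ⟨h, h⟩
  | symm _ ih => exact ⟨ih.2, ih.1⟩
  | trans _ _ ih1 ih2 => exact ⟨ih1.1, ih2.2⟩
  | gginv e =>
    exact ⟨by simp [BrauerData.IsValid], trivial⟩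
  | ginvg e =>
    exact ⟨by simp [BrauerData.IsValid], trivial⟩
  | tautau e h =>
    refine ⟨⟨fun _ => ⟨h, hB.tau_mem e h⟩, fun _ => ⟨hB.tau_mem e h, ?_⟩, trivial⟩, trivial⟩
    show B.tau (B.tau e) ∈ B.U
    rw [hB.tau_invol e h]; exact h
  | square e h =>
    constructor
    · rw [B.isValid_append]
      refine ⟨valid_replicate_g B _ e, ?_⟩
      rw [endpt_replicate_g hB]
      have h1 : B.act (B.d e) e ∈ B.U := (hB.sigma_mem e).mp h
      exact ⟨fun _ => ⟨h1, hB.tau_mem _ h1⟩, trivial⟩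
    · exact ⟨fun _ => ⟨h, hB.tau_mem e h⟩, valid_replicate_g B _ _⟩
  | post u _ hu ih =>
    refine ⟨(B.isValid_append _ _ _).mpr ⟨ih.1, hu⟩, (B.isValid_append _ _ _).mpr ⟨ih.2, ?_⟩⟩
    rwa [← Htp_endpt hB (by assumption)]
  | pre e v hv _ ih =>
    exact ⟨(B.isValid_append _ _ _).mpr ⟨hv, ih.1⟩, (B.isValid_append _ _ _).mpr ⟨hv, ih.2⟩⟩

end Aux


section Aux2

open BrauerData

variable {B : BrauerData}

lemma canc_g (hB : B.IsBrauer) :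
    ∀ (n : ℕ) (x : B.E), Htp B x (List.replicate n Step.g ++ List.replicate n Step.ginv) [] := by
  intro n
  induction n with
  | zero => intro x; simpa using Htp.refl x [] trivial
  | succ n ih =>
    intro x
    have e1 : List.replicate (n+1) Step.g ++ List.replicate (n+1) Step.ginv
        = List.replicate n Step.g ++ ([Step.g, Step.ginv] ++ List.replicate n Step.ginv) := by
      rw [List.replicate_succ' (n := n), List.replicate_succ (n := n), List.append_assoc]
      rfl
    rw [e1]
    have h1 : Htp B (B.endpt x (List.replicate n Step.g))
        ([Step.g, Step.ginv] ++ List.replicate n Step.ginv) ([] ++ List.replicate n Step.ginv) :=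
      Htp.post _ (Htp.gginv _) (valid_replicate_ginv B n _)
    have h2 := Htp.pre x (List.replicate n Step.g) (valid_replicate_g B n x) h1
    refine h2.trans ?_
    simpa using ih x

lemma canc_ginv (hB : B.IsBrauer) :
    ∀ (n : ℕ) (x : B.E), Htp B x (List.replicate n Step.ginv ++ List.replicate n Step.g) [] := by
  intro n
  induction n with
  | zero => intro x; simpa using Htp.refl x [] trivial
  | succ n ih =>
    intro x
    have e1 : List.replicate (n+1) Step.ginv ++ List.replicate (n+1) Step.g
        = List.replicate n Step.ginv ++ ([Step.ginv, Step.g] ++ List.replicate n Step.g) := by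
      rw [List.replicate_succ' (n := n), List.replicate_succ (n := n), List.append_assoc]
      rfl
    rw [e1]
    have h1 : Htp B (B.endpt x (List.replicate n Step.ginv))
        ([Step.ginv, Step.g] ++ List.replicate n Step.g) ([] ++ List.replicate n Step.g) :=
      Htp.post _ (Htp.ginvg _) (valid_replicate_g B n _)
    have h2 := Htp.pre x (List.replicate n Step.ginv) (valid_replicate_ginv B n x) h1
    refine h2.trans ?_
    simpa using ih x

lemma cancel_gSteps (hB : B.IsBrauer) (t : ℤ) (x : B.E) :
    Htp B x (gSteps t ++ gSteps (-t)) [] := by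
  rcases lt_trichotomy t 0 with h | h | h
  · have e1 : gSteps t = List.replicate (-t).toNat Step.ginv := by
      unfold gSteps; rw [if_neg (by omega)]
    have e2 : gSteps (-t) = List.replicate (-t).toNat Step.g := by
      unfold gSteps; rw [if_pos (by omega)]
    rw [e1, e2]; exact canc_ginv hB _ x
  · subst h
    simpa [gSteps] using Htp.refl x [] trivial
  · have e1 : gSteps t = List.replicate t.toNat Step.g := by
      unfold gSteps; rw [if_pos (by omega)]
    have e2 : gSteps (-t) = List.replicate t.toNat Step.ginv := by
      unfold gSteps; rw [if_neg (by omega), neg_neg]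
    rw [e1, e2]; exact canc_g hB _ x

lemma Htp_swap (hB : B.IsBrauer) {e : B.E} {l₁ l₂ : List Step} (t : ℤ)
    (h : Htp B e l₁ (l₂ ++ gSteps t)) : Htp B e l₂ (l₁ ++ gSteps (-t)) := by
  have hv2 : B.IsValid e l₂ := ((B.isValid_append e l₂ (gSteps t)).mp (Htp_valid hB h).2).1
  have hpost : Htp B e (l₁ ++ gSteps (-t)) ((l₂ ++ gSteps t) ++ gSteps (-t)) :=
    Htp.post _ h (valid_gSteps B _ _)
  have hpre : Htp B e (l₂ ++ (gSteps t ++ gSteps (-t))) (l₂ ++ []) :=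
    Htp.pre e l₂ hv2 (cancel_gSteps hB t _)
  have hmid : Htp B e l₂ ((l₂ ++ gSteps t) ++ gSteps (-t)) := by
    rw [List.append_assoc]
    simpa using hpre.symm
  exact hmid.trans hpost.symm

lemma valid_shift (hB : B.IsBrauer) :
    ∀ (l : List Step) (x : B.E), B.IsValid x l →
      B.IsValid (B.act (B.d x) x) l ∧
        B.endpt (B.act (B.d x) x) l = B.act (B.d (B.endpt x l)) (B.endpt x l) := by
  intro l
  induction l with
  | nil => intro x _; exact ⟨trivial, rfl⟩
  | cons s l ih =>
    intro x hv
    obtain ⟨h1, h2⟩ := hv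
    have hcomm : B.stepFun s (B.act (B.d x) x)
        = B.act (B.d (B.stepFun s x)) (B.stepFun s x) := by
      cases s with
      | g =>
        show B.act 1 (B.act (B.d x) x) = B.act (B.d (B.act 1 x)) (B.act 1 x)
        rw [hB.d_act 1 x, ← hB.act_add, ← hB.act_add, add_comm]
      | ginv =>
        show B.act (-1) (B.act (B.d x) x) = B.act (B.d (B.act (-1) x)) (B.act (-1) x)
        rw [hB.d_act (-1) x, ← hB.act_add, ← hB.act_add, add_comm]
      | tau =>
        obtain ⟨hxU, htU⟩ := h1 rfl
        show B.tau (B.act (B.d x) x) = B.act (B.d (B.tau x)) (B.tau x)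
        exact hB.tau_sigma x hxU
    constructor
    · refine ⟨fun hs => ?_, ?_⟩
      · subst hs
        obtain ⟨hxU, htU⟩ := h1 rfl
        refine ⟨(hB.sigma_mem x).mp hxU, ?_⟩
        show B.tau (B.act (B.d x) x) ∈ B.U
        rw [show B.tau (B.act (B.d x) x) = B.act (B.d (B.tau x)) (B.tau x) from
          hB.tau_sigma x hxU]
        exact (hB.sigma_mem (B.tau x)).mp htU
      · show B.IsValid (B.stepFun s (B.act (B.d x) x)) l
        rw [hcomm]
        exact (ih (B.stepFun s x) h2).1
    · show B.endpt (B.stepFun s (B.act (B.d x) x)) l = _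
      rw [hcomm]
      exact (ih (B.stepFun s x) h2).2

lemma valid_shift_pow (hB : B.IsBrauer) (n : ℕ) :
    ∀ (l : List Step) (x : B.E), B.IsValid x l →
      B.IsValid (B.act (n * B.d x) x) l ∧
        B.endpt (B.act (n * B.d x) x) l
          = B.act (n * B.d (B.endpt x l)) (B.endpt x l) := by
  induction n with
  | zero =>
    intro l x h
    constructor
    · simpa [hB.act_zero] using h
    · simp [hB.act_zero]
  | succ n ihn =>
    intro l x h
    obtain ⟨hv', he'⟩ := ihn l x h
    have hd' : B.d (B.act (n * B.d x) x) = B.d x := hB.d_act _ x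
    obtain ⟨hv2, he2⟩ := valid_shift hB l (B.act (n * B.d x) x) hv'
    have heq : B.act (B.d (B.act (n * B.d x) x)) (B.act (n * B.d x) x)
        = B.act ((n+1 : ℕ) * B.d x) x := by
      rw [hd', ← hB.act_add]
      congr 1
      push_cast; ring
    constructor
    · rw [← heq]; exact hv2
    · rw [← heq, he2, he']
      rw [hB.d_act _ (B.endpt x l), ← hB.act_add]
      congr 1
      push_cast; ring

lemma slide1 (hB : B.IsBrauer) :
    ∀ (u : List Step) (x : B.E), B.IsValid x u →
      Htp B x (u ++ List.replicate (B.d (B.endpt x u)) Step.g)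
              (List.replicate (B.d x) Step.g ++ u) := by
  intro u
  induction u with
  | nil =>
    intro x _
    simpa [BrauerData.endpt] using Htp.refl x (List.replicate (B.d x) Step.g) (valid_replicate_g B _ x)
  | cons s u ih =>
    intro x hv
    obtain ⟨h1, h2⟩ := hv
    have hletter : Htp B x ([s] ++ List.replicate (B.d (B.stepFun s x)) Step.g)
        (List.replicate (B.d x) Step.g ++ [s]) := by
      cases s with
      | g =>
        rw [show B.d (B.stepFun Step.g x) = B.d x from hB.d_act 1 x,
          show ([Step.g] ++ List.replicate (B.d x) Step.g : List Step)
              = List.replicate (B.d x + 1) Step.g by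
            rw [List.singleton_append, ← List.replicate_succ],
          show (List.replicate (B.d x) Step.g ++ [Step.g] : List Step)
              = List.replicate (B.d x + 1) Step.g by rw [List.replicate_succ']]
        exact Htp.refl x _ (valid_replicate_g B _ x)
      | ginv =>
        rw [show B.d (B.stepFun Step.ginv x) = B.d x from hB.d_act (-1) x]
        obtain ⟨m, hm⟩ : ∃ m, B.d x = m + 1 :=
          ⟨B.d x - 1, by have := hB.dpos x; omega⟩
        rw [hm]
        have left : Htp B x ([Step.ginv] ++ List.replicate (m+1) Step.g)
            (List.replicate m Step.g) := by
          have e1 : [Step.ginv] ++ List.replicate (m+1) Step.g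
              = [Step.ginv, Step.g] ++ List.replicate m Step.g := by
            rw [List.replicate_succ]; rfl
          rw [e1]
          have := Htp.post (List.replicate m Step.g) (Htp.ginvg x)
            (valid_replicate_g B m _)
          simpa using this
        have right : Htp B x (List.replicate (m+1) Step.g ++ [Step.ginv])
            (List.replicate m Step.g) := by
          have e1 : List.replicate (m+1) Step.g ++ [Step.ginv]
              = List.replicate m Step.g ++ ([Step.g, Step.ginv] ++ []) := by
            rw [List.replicate_succ']; simp
          rw [e1]
          have hin : Htp B (B.endpt x (List.replicate m Step.g))
              ([Step.g, Step.ginv] ++ []) ([] ++ []) :=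
            Htp.post [] (Htp.gginv _) trivial
          have := Htp.pre x (List.replicate m Step.g) (valid_replicate_g B m x) hin
          refine this.trans ?_
          simpa using Htp.refl x (List.replicate m Step.g) (valid_replicate_g B m x)
        exact left.trans right.symm
      | tau =>
        obtain ⟨hxU, htU⟩ := h1 rfl
        exact (Htp.square x hxU).symm
    have hstep1 : Htp B x ([s] ++ (u ++ List.replicate (B.d (B.endpt (B.stepFun s x) u)) Step.g))
        ([s] ++ (List.replicate (B.d (B.stepFun s x)) Step.g ++ u)) :=
      Htp.pre x [s] ⟨h1, trivial⟩ (ih (B.stepFun s x) h2)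
    have hstep2 : Htp B x (([s] ++ List.replicate (B.d (B.stepFun s x)) Step.g) ++ u)
        ((List.replicate (B.d x) Step.g ++ [s]) ++ u) := by
      refine Htp.post u hletter ?_
      rw [B.endpt_append, endpt_replicate_g hB]
      exact (valid_shift hB u (B.stepFun s x) h2).1
    have key := hstep1.trans hstep2
    rw [List.append_assoc] at key
    exact key

lemma slideN (hB : B.IsBrauer) (n : ℕ) :
    ∀ (u : List Step) (x : B.E), B.IsValid x u →
      Htp B x (u ++ List.replicate (n * B.d (B.endpt x u)) Step.g)
              (List.replicate (n * B.d x) Step.g ++ u) := by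
  induction n with
  | zero =>
    intro u x hu
    simpa using Htp.refl x u hu
  | succ n ih =>
    intro u x hu
    have hu' : B.IsValid x (u ++ List.replicate (B.d (B.endpt x u)) Step.g) :=
      (B.isValid_append _ _ _).mpr ⟨hu, valid_replicate_g B _ _⟩
    have hend' : B.endpt x (u ++ List.replicate (B.d (B.endpt x u)) Step.g)
        = B.act (B.d (B.endpt x u)) (B.endpt x u) := by
      rw [B.endpt_append, endpt_replicate_g hB]
    have hih := ih (u ++ List.replicate (B.d (B.endpt x u)) Step.g) x hu'
    rw [show B.d (B.endpt x (u ++ List.replicate (B.d (B.endpt x u)) Step.g))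
        = B.d (B.endpt x u) by rw [hend']; exact hB.d_act _ _] at hih
    obtain ⟨hvn, hen⟩ := valid_shift_pow hB n u x hu
    have hsl := slide1 hB u (B.act (n * B.d x) x) hvn
    rw [show B.d (B.endpt (B.act (n * B.d x) x) u) = B.d (B.endpt x u) by
        rw [hen]; exact hB.d_act _ _,
      show B.d (B.act (n * B.d x) x) = B.d x from hB.d_act _ x] at hsl
    have hpre := Htp.pre x (List.replicate (n * B.d x) Step.g)
      (valid_replicate_g B _ x)
      (by rw [endpt_replicate_g hB]; exact hsl)
    have e1 : u ++ List.replicate ((n+1) * B.d (B.endpt x u)) Step.g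
        = (u ++ List.replicate (B.d (B.endpt x u)) Step.g)
            ++ List.replicate (n * B.d (B.endpt x u)) Step.g := by
      rw [List.append_assoc, ← List.replicate_add]
      congr 2
      ring
    have e2 : List.replicate ((n+1) * B.d x) Step.g ++ u
        = List.replicate (n * B.d x) Step.g
            ++ (List.replicate (B.d x) Step.g ++ u) := by
      rw [← List.append_assoc, ← List.replicate_add]
      congr 2
      ring
    rw [e1, e2]
    exact hih.trans hpre

end Aux2


section Aux3

open BrauerData

variable {B : BrauerData}

lemma sigma_iter (hB : B.IsBrauer) (j : ℕ) (x : B.E) :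
    B.sigma^[j] x = B.act (j * B.d x) x := by
  induction j with
  | zero => simp [hB.act_zero]
  | succ j ih =>
    rw [Function.iterate_succ_apply', ih]
    unfold BrauerData.sigma
    rw [hB.d_act, ← hB.act_add]
    congr 1
    push_cast; ring

lemma order_dvd_nat (hB : B.IsBrauer) {r : ℕ} (hr : IsOrderOf B r) (n : ℕ)
    (h : ∀ x, B.act (n * B.d x) x = x) : r ∣ n := by
  have hiter : ∀ x, B.sigma^[n] x = x := fun x => by rw [sigma_iter hB]; exact h x
  have hq : ∀ (q : ℕ) (x : B.E), B.sigma^[r * q] x = x := by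
    intro q
    induction q with
    | zero => intro x; simp
    | succ q ih =>
      intro x
      rw [Nat.mul_succ, Function.iterate_add_apply, hr.2.1 x]
      exact ih x
  have hmod : ∀ x, B.sigma^[n % r] x = x := by
    intro x
    have h0 : B.sigma^[n % r + r * (n / r)] x = x := by
      rw [Nat.mod_add_div]; exact hiter x
    rwa [Function.iterate_add_apply, hq _ x] at h0
  by_contra hnd
  have hpos : 0 < n % r := Nat.pos_of_ne_zero fun h0 => hnd (Nat.dvd_of_mod_eq_zero h0)
  have h1 := hr.2.2 (n % r) hpos hmod
  have h2 := Nat.mod_lt n hr.1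
  omega

lemma keyPos (hB : B.IsBrauer) (hconn : B.Connected) {e : B.E} {l₁ l₂ : List Step}
    (h₁ : B.Closed e l₁) (h₂ : B.Closed e l₂) (n : ℕ)
    (h : Htp B e l₁ (l₂ ++ List.replicate (n * B.d e) Step.g)) :
    ∀ x, B.act (n * B.d x) x = x := by
  intro x
  obtain ⟨u, hu, hue⟩ := hconn x e
  obtain ⟨v, hv, hvx⟩ := hconn e x
  have h' : Htp B x (u ++ l₁) (u ++ (l₂ ++ List.replicate (n * B.d e) Step.g)) :=
    Htp.pre x u hu (by rw [hue]; exact h)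
  have hvalv : B.IsValid (B.endpt x (u ++ l₁)) v := by
    rw [B.endpt_append, hue, h₁.2]; exact hv
  have h'' := Htp.post v h' hvalv
  have e3 : (u ++ (l₂ ++ List.replicate (n * B.d e) Step.g)) ++ v
      = (u ++ l₂) ++ (List.replicate (n * B.d e) Step.g ++ v) := by
    simp [List.append_assoc]
  rw [e3] at h''
  have hsl := slideN hB n v e hv
  rw [hvx] at hsl
  have hul2 : B.IsValid x (u ++ l₂) :=
    (B.isValid_append _ _ _).mpr ⟨hu, by rw [hue]; exact h₂.1⟩
  have hpre2 : Htp B x ((u ++ l₂) ++ (List.replicate (n * B.d e) Step.g ++ v))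
      ((u ++ l₂) ++ (v ++ List.replicate (n * B.d x) Step.g)) := by
    refine Htp.pre x (u ++ l₂) hul2 ?_
    rw [B.endpt_append, hue, h₂.2]
    exact hsl.symm
  have htotal := h''.trans hpre2
  have hend := Htp_endpt hB htotal
  have eL : B.endpt x ((u ++ l₁) ++ v) = x := by
    rw [B.endpt_append, B.endpt_append, hue, h₁.2, hvx]
  have eR : B.endpt x ((u ++ l₂) ++ (v ++ List.replicate (n * B.d x) Step.g))
      = B.act (n * B.d x) x := by
    rw [B.endpt_append, B.endpt_append, B.endpt_append, hue, h₂.2, hvx,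
      endpt_replicate_g hB]
    norm_cast
  rw [eL, eR] at hend
  exact hend.symm

lemma masterNonneg (hB : B.IsBrauer) (hconn : B.Connected) {r : ℕ}
    (hr : IsOrderOf B r) {e : B.E} {l₁ l₂ : List Step} (h₁ : B.Closed e l₁)
    (h₂ : B.Closed e l₂) {m : ℤ} (hm : 0 ≤ m)
    (h : Htp B e l₁ (l₂ ++ gSteps (m * B.d e))) : (r : ℤ) ∣ m := by
  lift m to ℕ using hm with n
  have hg : gSteps ((n : ℤ) * B.d e) = List.replicate (n * B.d e) Step.g := by
    unfold gSteps
    rw [if_pos (by positivity)]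
    congr 1
  rw [hg] at h
  have hkey := keyPos hB hconn h₁ h₂ n h
  exact Int.natCast_dvd_natCast.mpr (order_dvd_nat hB hr n hkey)

lemma master (hB : B.IsBrauer) (hconn : B.Connected) {r : ℕ}
    (hr : IsOrderOf B r) {e : B.E} {l₁ l₂ : List Step} (h₁ : B.Closed e l₁)
    (h₂ : B.Closed e l₂) {m : ℤ}
    (h : Htp B e l₁ (l₂ ++ gSteps (m * B.d e))) : (r : ℤ) ∣ m := by
  rcases le_or_gt 0 m with hm | hm
  · exact masterNonneg hB hconn hr h₁ h₂ hm h
  · have h2 := Htp_swap hB (m * B.d e) h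
    rw [show (-(m * (B.d e : ℤ))) = (-m) * B.d e by ring] at h2
    have := masterNonneg hB hconn hr h₂ h₁ (by omega) h2
    exact (dvd_neg).mp this

end Aux3


section Aux4

open BrauerData

variable {B B' : BrauerData} {f : B.E → B'.E}

lemma map_step (hf : IsCovering B B' f) (s : Step) (x : B.E)
    (h : s = Step.tau → x ∈ B.U) :
    f (B.stepFun s x) = B'.stepFun s (f x) := by
  cases s with
  | g => exact hf.1 1 x
  | ginv => exact hf.1 (-1) x
  | tau => exact hf.2.2.1 x (h rfl)

lemma cov_valid_endpt (hf : IsCovering B B' f) :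
    ∀ (l : List Step) (x : B.E), B.IsValid x l →
      B'.IsValid (f x) l ∧ f (B.endpt x l) = B'.endpt (f x) l := by
  intro l
  induction l with
  | nil => intro x _; exact ⟨trivial, rfl⟩
  | cons s l ih =>
    intro x hv
    obtain ⟨h1, h2⟩ := hv
    have hc : s = Step.tau → f x ∈ B'.U ∧ B'.tau (f x) ∈ B'.U := by
      intro hs
      obtain ⟨hxU, htU⟩ := h1 hs
      exact ⟨(hf.2.1 x).mp hxU, by rw [← hf.2.2.1 x hxU]; exact (hf.2.1 _).mp htU⟩
    have hstep := map_step hf s x fun hs => (h1 hs).1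
    obtain ⟨ihv, ihe⟩ := ih (B.stepFun s x) h2
    refine ⟨⟨hc, ?_⟩, ?_⟩
    · rw [← hstep]; exact ihv
    · show f (B.endpt (B.stepFun s x) l) = B'.endpt (B'.stepFun s (f x)) l
      rw [← hstep]; exact ihe

lemma cov_valid_lift (hf : IsCovering B B' f) :
    ∀ (l : List Step) (x : B.E), B'.IsValid (f x) l → B.IsValid x l := by
  intro l
  induction l with
  | nil => intro x _; trivial
  | cons s l ih =>
    intro x hv
    obtain ⟨h1, h2⟩ := hv
    have hcond : s = Step.tau → x ∈ B.U ∧ B.tau x ∈ B.U := by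
      intro hs
      obtain ⟨hfU, htU⟩ := h1 hs
      have hxU : x ∈ B.U := (hf.2.1 x).mpr hfU
      refine ⟨hxU, (hf.2.1 _).mpr ?_⟩
      rw [hf.2.2.1 x hxU]; exact htU
    refine ⟨hcond, ih (B.stepFun s x) ?_⟩
    rw [map_step hf s x fun hs => (hcond hs).1]
    exact h2

lemma Htp_push (hB : B.IsBrauer) (hf : IsCovering B B' f) {x : B.E}
    {l₁ l₂ : List Step} (h : Htp B x l₁ l₂) : Htp B' (f x) l₁ l₂ := by
  induction h with
  | refl e l hval => exact Htp.refl _ l (cov_valid_endpt hf l e hval).1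
  | symm _ ih => exact ih.symm
  | trans _ _ i1 i2 => exact i1.trans i2
  | gginv e => exact Htp.gginv _
  | ginvg e => exact Htp.ginvg _
  | tautau e h => exact Htp.tautau _ ((hf.2.1 e).mp h)
  | square e h =>
    have h1 : B.d e = B'.d (f e) := (hf.2.2.2 e).symm
    have h2 : B.d (B.tau e) = B'.d (B'.tau (f e)) := by
      rw [← hf.2.2.1 e h, hf.2.2.2]
    rw [h1, h2]
    exact Htp.square (f e) ((hf.2.1 e).mp h)
  | post u h hu ih =>
    refine Htp.post u ih ?_
    rw [← (cov_valid_endpt hf _ _ (Htp_valid hB h).1).2]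
    exact (cov_valid_endpt hf u _ hu).1
  | pre e v hv h ih =>
    refine Htp.pre (f e) v (cov_valid_endpt hf v e hv).1 ?_
    rw [← (cov_valid_endpt hf v e hv).2]
    exact ih

lemma Htp_lift (hB' : B'.IsBrauer) (hf : IsCovering B B' f) {y : B'.E}
    {l₁ l₂ : List Step} (h : Htp B' y l₁ l₂) :
    ∀ x : B.E, f x = y → Htp B x l₁ l₂ := by
  induction h with
  | refl e l hval =>
    intro x hx; subst hx
    exact Htp.refl x l (cov_valid_lift hf l x hval)
  | symm _ ih => intro x hx; exact (ih x hx).symm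
  | trans _ _ i1 i2 => intro x hx; exact (i1 x hx).trans (i2 x hx)
  | gginv e => intro x hx; exact Htp.gginv x
  | ginvg e => intro x hx; exact Htp.ginvg x
  | tautau e h =>
    intro x hx; subst hx
    exact Htp.tautau x ((hf.2.1 x).mpr h)
  | square e h =>
    intro x hx; subst hx
    have hxU : x ∈ B.U := (hf.2.1 x).mpr h
    have h1 : B'.d (f x) = B.d x := hf.2.2.2 x
    have h2 : B'.d (B'.tau (f x)) = B.d (B.tau x) := by
      rw [← hf.2.2.1 x hxU, hf.2.2.2]
    rw [h1, h2]
    exact Htp.square x hxU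
  | post u h hu ih =>
    intro x hx; subst hx
    refine Htp.post u (ih x rfl) ?_
    have hv1 : B.IsValid x _ := cov_valid_lift hf _ x (Htp_valid hB' h).1
    exact cov_valid_lift hf u _ (by rw [(cov_valid_endpt hf _ x hv1).2]; exact hu)
  | pre e v hv h ih =>
    intro x hx; subst hx
    have hvB : B.IsValid x v := cov_valid_lift hf v x hv
    refine Htp.pre x v hvB (ih (B.endpt x v) ?_)
    rw [(cov_valid_endpt hf v x hvB).2]

end Aux4

/-- A covering `f : E → E'` of finite connected Brauer `G`-sets
induces a well-defined injective group homomorphism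
`f_* : Π'_m(E, e) → Π'_m(E', f e)`, `[[w]] ↦ [[f w]]`, of reduced fundamental
groups: for closed walks `l₁, l₂` at `e` one has `l₁ ≈' l₂` in `E` iff
`f l₁ ≈' f l₂` in `E'` (the image walk has the same step word; `≈'` is taken with
respect to the orders `r`, `r'` of the respective Nakayama automorphisms, and the
map clearly preserves composition of walks). -/
theorem reduced_pi1_covering_injective (B B' : BrauerData)
    (hB : B.IsBrauer) (hB' : B'.IsBrauer)
    (hfin : Finite B.E) (hfin' : Finite B'.E)
    (hconn : B.Connected) (hconn' : B'.Connected)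
    (f : B.E → B'.E) (hf : IsCovering B B' f) (e : B.E)
    (r r' : ℕ) (hr : IsOrderOf B r) (hr' : IsOrderOf B' r') :
    ∀ l₁ l₂ : List Step, B.Closed e l₁ → B.Closed e l₂ →
      (RedHtp B r e l₁ l₂ ↔ RedHtp B' r' (f e) l₁ l₂) := by
  intro l₁ l₂ h₁ h₂
  have hd' : B'.d (f e) = B.d e := hf.2.2.2 e
  have hfe1 : B'.endpt (f e) l₁ = f e := by
    rw [← (cov_valid_endpt hf l₁ e h₁.1).2, h₁.2]
  have hc1' : B'.Closed (f e) l₁ := ⟨(cov_valid_endpt hf l₁ e h₁.1).1, hfe1⟩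
  have hfe2 : B'.endpt (f e) l₂ = f e := by
    rw [← (cov_valid_endpt hf l₂ e h₂.1).2, h₂.2]
  have hc2' : B'.Closed (f e) l₂ := ⟨(cov_valid_endpt hf l₂ e h₂.1).1, hfe2⟩
  constructor
  · rintro ⟨k, hk⟩
    rw [h₁.2] at hk
    have hk' : Htp B' (f e) l₁ (l₂ ++ gSteps (k * r * B.d e)) := Htp_push hB hf hk
    have hdvd : (r' : ℤ) ∣ k * r := by
      refine master hB' hconn' hr' hc1' hc2' (m := k * r) ?_
      rw [hd']
      exact hk'
    obtain ⟨k'', hk''⟩ := hdvd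
    refine ⟨k'', ?_⟩
    rw [hfe1, hd', show (k'' * (r' : ℤ) * (B.d e : ℤ)) = k * r * B.d e by
      rw [mul_comm k'' (r' : ℤ), ← hk'']]
    exact hk'
  · rintro ⟨k, hk⟩
    rw [hfe1, hd'] at hk
    have hkB : Htp B e l₁ (l₂ ++ gSteps (k * r' * B.d e)) := Htp_lift hB' hf hk e rfl
    have hdvd : (r : ℤ) ∣ k * r' := master hB hconn hr h₁ h₂ (m := k * r') hkB
    obtain ⟨k'', hk''⟩ := hdvd
    refine ⟨k'', ?_⟩
    rw [h₁.2, show (k'' * (r : ℤ) * (B.d e : ℤ)) = k * r' * B.d e by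
      rw [mul_comm k'' (r : ℤ), ← hk'']]
    exact hkB

end FB
end

section
/- The center of the group F⟨a, b⟩ / ⟨a² = b²⟩ (the free group on two generators a, b modulo the normal closure of a²b⁻²) is the infinite cyclic subgroup generated by the image of a²; in particular, the image of a² has infinite order. -/
namespace FB

/-- The single relation `a² = b²` on generators `a = true`, `b = false`. -/
def relsA2B2 : Set (FreeGroup Bool) :=
  {FreeGroup.of true ^ 2 * (FreeGroup.of false ^ 2)⁻¹}


section Proof16
open SemidirectProduct Multiplicative


abbrev MZ := Multiplicative ℤ

noncomputable def invAut : MulAut MZ := MulEquiv.inv MZ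

noncomputable def thet : MZ →* MulAut MZ := zpowersHom _ invAut

@[simp] lemma invAut_apply (x : MZ) : invAut x = x⁻¹ := rfl

lemma invAut_mul : invAut * invAut = 1 := by
  ext x; simp [invAut]

lemma invAut_inv : invAut⁻¹ = invAut := inv_eq_of_mul_eq_one_right invAut_mul

lemma invAut_sq : invAut ^ (2:ℤ) = 1 := by
  rw [zpow_two]; ext x; simp [invAut]

lemma thet_apply (n : ℤ) : thet (Multiplicative.ofAdd n) = invAut ^ n := rfl

lemma thet_even {n : ℤ} (h : Even n) : thet (Multiplicative.ofAdd n) = 1 := by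
  obtain ⟨k, rfl⟩ := h
  rw [thet_apply, show k + k = 2 * k by ring, zpow_mul, invAut_sq, one_zpow]

lemma thet_odd {n : ℤ} (h : Odd n) : thet (Multiplicative.ofAdd n) = invAut := by
  obtain ⟨k, rfl⟩ := h
  rw [thet_apply, zpow_add, zpow_mul, invAut_sq, one_zpow, one_mul, zpow_one]

abbrev KK := MZ ⋊[thet] MZ

noncomputable def t0 : KK := SemidirectProduct.inr (Multiplicative.ofAdd 1)
noncomputable def u0 : KK := SemidirectProduct.inl (Multiplicative.ofAdd 1)



abbrev P := PresentedGroup relsA2B2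

def aP : P := PresentedGroup.of true
def bP : P := PresentedGroup.of false
def uP : P := bP⁻¹ * aP

lemma rel_ab : aP ^ 2 = bP ^ 2 := by
  have h : (FreeGroup.of true ^ 2 * (FreeGroup.of false ^ 2)⁻¹ : FreeGroup Bool)
      ∈ Subgroup.normalClosure relsA2B2 :=
    Subgroup.subset_normalClosure rfl
  have := (QuotientGroup.eq_one_iff _).mpr h
  have h2 : (aP ^ 2 * (bP ^ 2)⁻¹ : P) = 1 := this
  rw [mul_inv_eq_one] at h2
  exact h2

lemma conj_u : aP * uP * aP⁻¹ = uP⁻¹ := by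
  have h1 : aP * bP⁻¹ = aP⁻¹ * bP := by
    rw [mul_inv_eq_iff_eq_mul, mul_assoc, ← sq, ← rel_ab, sq, ← mul_assoc,
      inv_mul_cancel, one_mul]
  calc aP * uP * aP⁻¹ = aP * bP⁻¹ * (aP * aP⁻¹) := by
        simp [uP, mul_assoc]
    _ = aP⁻¹ * bP := by rw [mul_inv_cancel, mul_one, h1]
    _ = uP⁻¹ := by simp [uP]

lemma comm_u : Commute (aP ^ (2:ℤ)) uP := by
  have h2 : aP ^ (2:ℤ) * uP * (aP ^ (2:ℤ))⁻¹ = uP := by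
    rw [zpow_two]
    calc (aP*aP)*uP*(aP*aP)⁻¹ = aP*(aP*uP*aP⁻¹)*aP⁻¹ := by group
      _ = aP*uP⁻¹*aP⁻¹ := by rw [conj_u]
      _ = (aP*uP*aP⁻¹)⁻¹ := by group
      _ = uP := by rw [conj_u, inv_inv]
  have h3 := congrArg (· * aP ^ (2:ℤ)) h2
  show aP ^ (2:ℤ) * uP = uP * aP ^ (2:ℤ)
  simpa [mul_assoc] using h3

lemma conj_zpow_even {n : ℤ} (h : Even n) : aP ^ n * uP * (aP ^ n)⁻¹ = uP := by
  obtain ⟨k, rfl⟩ := h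
  have : aP ^ (k + k) = (aP ^ (2:ℤ)) ^ k := by
    rw [← zpow_mul]; ring_nf
  rw [this]
  have hc : Commute ((aP ^ (2:ℤ)) ^ k) uP := comm_u.zpow_left k
  rw [hc.eq, mul_assoc, mul_inv_cancel, mul_one]

lemma conj_zpow_odd {n : ℤ} (h : Odd n) : aP ^ n * uP * (aP ^ n)⁻¹ = uP⁻¹ := by
  obtain ⟨k, rfl⟩ := h
  have he : aP ^ (2 * k + 1) = aP ^ (2*k) * aP := by rw [zpow_add, zpow_one]
  have h2 : aP ^ (2*k) * uP * (aP ^ (2*k))⁻¹ = uP := conj_zpow_even ⟨k, by ring⟩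
  rw [he, mul_inv_rev]
  calc aP ^ (2*k) * aP * uP * (aP⁻¹ * (aP ^ (2*k))⁻¹)
      = aP ^ (2*k) * (aP * uP * aP⁻¹) * (aP ^ (2*k))⁻¹ := by group
    _ = aP ^ (2*k) * uP⁻¹ * (aP ^ (2*k))⁻¹ := by rw [conj_u]
    _ = (aP ^ (2*k) * uP * (aP ^ (2*k))⁻¹)⁻¹ := by group
    _ = uP⁻¹ := by rw [h2]



noncomputable def fgen : Bool → KK := fun x => if x then t0 else u0 * t0

lemma sq_ut : (u0 * t0) ^ 2 = t0 ^ 2 := by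
  have hmul : u0 * t0 = (⟨ofAdd 1, ofAdd 1⟩ : KK) := (mk_eq_inl_mul_inr _ _).symm
  have h : thet (ofAdd 1) (ofAdd 1) = (ofAdd 1)⁻¹ := by
    rw [thet_odd ⟨0, by ring⟩]; rfl
  rw [sq, hmul, mul_def, h, mul_inv_cancel, sq, t0]
  ext <;> simp

lemma hrels : ∀ r ∈ relsA2B2, FreeGroup.lift fgen r = 1 := by
  intro r hr
  simp only [relsA2B2, Set.mem_singleton_iff] at hr
  subst hr
  simp [fgen, sq_ut]

noncomputable def phiG : P →* KK := PresentedGroup.toGroup hrels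

lemma phiG_a : phiG aP = t0 := PresentedGroup.toGroup.of hrels
lemma phiG_b : phiG bP = u0 * t0 := PresentedGroup.toGroup.of hrels

lemma psi_cond : ∀ g : MZ, (zpowersHom P uP).comp (thet g).toMonoidHom
    = (MulAut.conj (zpowersHom P aP g)).toMonoidHom.comp (zpowersHom P uP) := by
  intro g
  apply MonoidHom.ext_mint
  simp only [MonoidHom.comp_apply, MulEquiv.coe_toMonoidHom, MulAut.conj_apply,
    zpowersHom_apply, toAdd_ofAdd, zpow_one]
  rcases Int.even_or_odd g.toAdd with he | ho
  · have : thet g = 1 := by rw [← ofAdd_toAdd g]; exact thet_even he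
    rw [this]
    simp [conj_zpow_even he]
  · have : thet g = invAut := by rw [← ofAdd_toAdd g]; exact thet_odd ho
    rw [this]
    simp only [invAut_apply]
    rw [conj_zpow_odd ho]
    simp


noncomputable def psiG : KK →* P := lift (zpowersHom P uP) (zpowersHom P aP) psi_cond

lemma u_mul_a : uP * aP = bP := by
  rw [uP, mul_assoc, ← sq, rel_ab, sq, ← mul_assoc, inv_mul_cancel, one_mul]

lemma psi_phi : psiG.comp phiG = MonoidHom.id P := by
  apply PresentedGroup.ext
  intro x
  cases x
  · show psiG (phiG bP) = bP
    rw [phiG_b, map_mul]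
    show psiG (inl (ofAdd 1)) * psiG (inr (ofAdd 1)) = bP
    rw [psiG, lift_inl, lift_inr, zpowersHom_apply, zpowersHom_apply]
    simpa using u_mul_a
  · show psiG (phiG aP) = aP
    rw [phiG_a]
    show psiG (inr (ofAdd 1)) = aP
    rw [psiG, lift_inr, zpowersHom_apply]
    simp

lemma phi_psi : phiG.comp psiG = MonoidHom.id KK := by
  apply hom_ext
  · apply MonoidHom.ext_mint
    show phiG (psiG (inl (ofAdd 1))) = inl (ofAdd 1)
    rw [psiG, lift_inl, zpowersHom_apply]
    simp only [toAdd_ofAdd, zpow_one]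
    rw [uP, map_mul, map_inv, phiG_a, phiG_b, t0, u0]
    rw [mul_inv_rev, ← map_inv inr, ← map_inv inl, ← inl_aut_inv, thet_odd ⟨0, by ring⟩,
      invAut_inv]
    simp [invAut]
  · apply MonoidHom.ext_mint
    show phiG (psiG (inr (ofAdd 1))) = inr (ofAdd 1)
    rw [psiG, lift_inr, zpowersHom_apply]
    simp only [toAdd_ofAdd, zpow_one]
    rw [phiG_a, t0]



lemma psi_phi_apply (x : P) : psiG (phiG x) = x := DFunLike.congr_fun psi_phi x
lemma phi_psi_apply (w : KK) : phiG (psiG w) = w := DFunLike.congr_fun phi_psi w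

lemma phiG_a2 : phiG (aP ^ 2) = inr (ofAdd 2) := by
  rw [map_pow, phiG_a, t0, ← map_pow]
  norm_num
  rfl

lemma a2_central : aP ^ 2 ∈ Subgroup.center P := by
  rw [Subgroup.mem_center_iff]
  intro g
  have hg : g ∈ Subgroup.centralizer {aP ^ 2} := by
    apply PresentedGroup.generated_by
    intro j
    rw [Subgroup.mem_centralizer_iff]
    intro h hh
    rw [Set.mem_singleton_iff] at hh
    subst hh
    cases j
    · show aP ^ 2 * bP = bP * aP ^ 2
      rw [rel_ab, sq, mul_assoc, ← mul_assoc bP bP bP]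
    · show aP ^ 2 * aP = aP * aP ^ 2
      rw [sq, mul_assoc]
  exact ((Subgroup.mem_centralizer_iff.mp hg) _ rfl).symm

lemma central_to_zpowers {z : P} (hz : z ∈ Subgroup.center P) :
    z ∈ Subgroup.zpowers (aP ^ 2) := by
  have hc : ∀ w : KK, w * phiG z = phiG z * w := by
    intro w
    have h := (Subgroup.mem_center_iff.mp hz) (psiG w)
    calc w * phiG z = phiG (psiG w) * phiG z := by rw [phi_psi_apply]
      _ = phiG (psiG w * z) := by rw [map_mul]
      _ = phiG (z * psiG w) := by rw [h]
      _ = phiG z * w := by rw [map_mul, phi_psi_apply]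
  have h1 := congrArg SemidirectProduct.left (hc (inr (ofAdd 1)))
  simp only [mul_left, left_inr, mul_right, right_inr, map_one, mul_one, one_mul] at h1
  rw [thet_odd ⟨0, by ring⟩] at h1
  have hx1 : (phiG z).left = 1 := by
    have h5 := congrArg toAdd h1
    simp only [invAut_apply, toAdd_inv] at h5
    have h6 : toAdd (phiG z).left = 0 := by omega
    rw [← ofAdd_toAdd (phiG z).left, h6]; rfl
  have h3 := congrArg SemidirectProduct.left (hc (inl (ofAdd 1)))
  simp only [mul_left, left_inl, right_inl, mul_right, map_one, mul_one, one_mul, hx1] at h3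
  have hyeven : Even (toAdd (phiG z).right) := by
    by_contra hodd
    rw [Int.not_even_iff_odd] at hodd
    rw [← ofAdd_toAdd (phiG z).right, thet_odd hodd] at h3
    have h7 := congrArg toAdd h3
    simp only [invAut_apply, toAdd_inv, toAdd_ofAdd] at h7
    omega
  obtain ⟨k, hk⟩ := hyeven
  have hform : phiG z = inr (phiG z).right := by
    conv_lhs => rw [← inl_left_mul_inr_right (phiG z)]
    rw [hx1, map_one, one_mul]
  have hzeq : z = (aP ^ 2) ^ k := by
    have hpsi : psiG (inr (phiG z).right) = aP ^ toAdd (phiG z).right := by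
      rw [psiG, lift_inr, zpowersHom_apply]
    calc z = psiG (phiG z) := (psi_phi_apply z).symm
      _ = aP ^ toAdd (phiG z).right := by
          conv_lhs => rw [hform]
          rw [hpsi]
      _ = (aP ^ 2) ^ k := by
          rw [hk, ← zpow_natCast aP 2, ← zpow_mul]
          congr 1
          ring
  exact ⟨k, hzeq.symm⟩

lemma a2_infinite : ¬ IsOfFinOrder (aP ^ 2) := by
  intro hfin
  have h1 : IsOfFinOrder (phiG (aP ^ 2)) := MonoidHom.isOfFinOrder phiG hfin
  rw [phiG_a2] at h1
  have h2 : IsOfFinOrder (rightHom (inr (ofAdd 2) : KK)) :=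
    MonoidHom.isOfFinOrder rightHom h1
  rw [rightHom_inr] at h2
  obtain ⟨n, hn, hpow⟩ := isOfFinOrder_iff_pow_eq_one.mp h2
  have := congrArg toAdd hpow
  have h8 : (n : ℤ) * 2 = 0 := by simpa [toAdd_pow, nsmul_eq_mul] using this
  omega


end Proof16

/-- The center of `F⟨a,b⟩/⟨a² = b²⟩` is the infinite cyclic
subgroup generated by (the image of) `a²`. -/
theorem center_a2_eq_b2 :
    Subgroup.center (PresentedGroup relsA2B2) =
      Subgroup.zpowers ((PresentedGroup.of true : PresentedGroup relsA2B2) ^ 2) ∧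
    ¬ IsOfFinOrder ((PresentedGroup.of true : PresentedGroup relsA2B2) ^ 2) :=
  ⟨le_antisymm (fun z hz => central_to_zpowers hz)
    (Subgroup.zpowers_le.mpr a2_central), a2_infinite⟩

end FB
end
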